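/- Every x ∈ U satisfies limsup_{n→∞} (−log_β |I_n(x)|)/n = 1 + λ(β); that is, U ⊂ E where E = {x ∈ (0,1] : limsup_{n→∞} (−log_β |I_n(x)|)/n = 1 + λ(β)}. -/

import Mathlib

/-!
The basic interval `I_n(x)` is a half-open interval of length `c_n(x) β^{-n}`, where the
scaled length `c_n(x) ≤ 1` is always a point `T_β^j 1` of the orbit of `1` with `j ≤ n`.
Since `T_β^j 1 ∈ (β^{-(t_j+1)}, β^{-t_j}]`, this gives `-log_β |I_n(x)| < n + Γ_n + 1`, hence
the upper bound `1 + λ(β)` for every `x`. For infinitely many `k`, a point of `U` carries the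
block `(ε*_1, …, ε*_{m_k})` of `ω_k`, ending at some position `n_k`; there
`c_{n_k}(x) ≤ T_β^{m_k} 1 ≤ β^{-t_{m_k}}`, so `-log_β |I_{n_k}(x)| / n_k ≥ 1 + t_{m_k} / n_k`,
and the two limits assumed of `(m_k)` say exactly that `t_{m_k} / n_k → λ(β)`.
-/

open MeasureTheory Filter Set

noncomputable section

/-- The β-transformation on `(0,1]`: `T_β x = βx − ⌈βx⌉ + 1`. -/
def Tbeta (β x : ℝ) : ℝ := β * x - ⌈β * x⌉ + 1

/-- The digits of the β-expansion, 0-indexed: `eps β x n` is the `(n+1)`-st digit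
`ε_{n+1}(x,β) = ⌈β T_β^n x⌉ − 1`. -/
def eps (β x : ℝ) (n : ℕ) : ℤ := ⌈β * (Tbeta β)^[n] x⌉ - 1

/-- The basic interval of order `n` containing `x`:
all `y ∈ (0,1]` whose first `n` digits agree with those of `x`. -/
def In (β x : ℝ) (n : ℕ) : Set ℝ := {y ∈ Ioc (0:ℝ) 1 | ∀ j < n, eps β y j = eps β x j}

/-- The length of a set (Lebesgue measure). -/
def len (s : Set ℝ) : ℝ := (volume s).toReal

/-- `tseq β n = t_n`: the maximal length of the block of zero digits of the
β-expansion of `1` immediately following position `n` (digits `ε*_{n+1},…,ε*_{n+k}`). -/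
def tseq (β : ℝ) (n : ℕ) : ℕ := sSup {k : ℕ | ∀ j < k, eps β 1 (n + j) = 0}

/-- `Gam β n = Γ_n = max_{1 ≤ k ≤ n} t_k`. -/
def Gam (β : ℝ) (n : ℕ) : ℕ := Finset.sup (Finset.Icc 1 n) (tseq β)

/-- `lam β = λ(β) = limsup_n Γ_n / n`. -/
def lam (β : ℝ) : ℝ := Filter.limsup (fun n : ℕ => (Gam β n : ℝ) / n) atTop

/-- `kstar β x n = k_n^*(x)`: the smallest `k ≥ 0` such that
`(ε_{k+1}(x),…,ε_n(x)) = (ε*_1,…,ε*_{n−k})`. -/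
def kstar (β x : ℝ) (n : ℕ) : ℕ := sInf {k : ℕ | ∀ i < n - k, eps β x (k + i) = eps β 1 i}

/-- `tau β x = τ(x) = limsup_n t_{n − k_n^*(x)} / n`. -/
def tau (β x : ℝ) : ℝ :=
  Filter.limsup (fun n : ℕ => (tseq β (n - kstar β x n) : ℝ) / n) atTop

/-- The upper density `\overline{D}(x) = limsup_n (−log_β |I_n(x)|)/n`. -/
def upperD (β x : ℝ) : ℝ :=
  Filter.limsup (fun n : ℕ => -Real.logb β (len (In β x n)) / n) atTop

/-- The lower density `\underline{D}(x) = liminf_n (−log_β |I_n(x)|)/n`. -/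
def lowerD (β x : ℝ) : ℝ :=
  Filter.liminf (fun n : ℕ => -Real.logb β (len (In β x n)) / n) atTop

/-- The basic interval (cylinder) associated to a finite word `w` of digits:
all `x ∈ (0,1]` whose β-expansion starts with `w`. -/
def cyl (β : ℝ) (w : List ℤ) : Set ℝ :=
  {x ∈ Ioc (0:ℝ) 1 | ∀ j < w.length, eps β x j = w.getD j 0}

/-- A finite word is admissible if it occurs as the initial digits of some `x ∈ (0,1]`. -/
def Admissible (β : ℝ) (w : List ℤ) : Prop := (cyl β w).Nonempty

/-- A basic interval is full if its length is `β^{−n}` where `n` is the order. -/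
def IsFull (β : ℝ) (w : List ℤ) : Prop := len (cyl β w) = β ^ (-(w.length : ℤ))

/-- The word `(ε*_1,…,ε*_n)` of the first `n` digits of the β-expansion of `1`. -/
def estarWord (β : ℝ) (n : ℕ) : List ℤ := (List.range n).map (eps β 1)

/-- The interior of a set relative to the subspace `[0,1]`
(for `S ⊆ [0,1]` this is exactly the interior of `S` in the topology of `[0,1]`). -/
def intIn01 (S : Set ℝ) : Set ℝ := Icc 0 1 \ closure (Icc 0 1 \ S)

open Topology

section Limsup

/-- In `ℝ`, the limsup of a sequence that is not bounded above is the junk value `sInf ∅ = 0`. -/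
lemma Real.isBoundedUnder_le_of_limsup_ne_zero {ι : Type*} {l : Filter ι} {u : ι → ℝ}
    (h : limsup u l ≠ 0) : IsBoundedUnder (· ≤ ·) l u := by
  by_contra hu
  refine h ?_
  rw [limsup_eq, ← Real.sInf_empty]
  congr 1
  exact eq_empty_of_forall_notMem fun a ha => hu ⟨a, ha⟩

lemma le_limsup_of_frequently_le_comp {ι κ : Type*} {l : Filter ι} {l' : Filter κ}
    {f : κ → ℝ} {n : ι → κ} {b : ι → ℝ} {L : ℝ} (hn : Tendsto n l l')
    (hb : Tendsto b l (𝓝 L)) (hbf : ∃ᶠ k in l, b k ≤ f (n k))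
    (hf : IsBoundedUnder (· ≤ ·) l' f) : L ≤ limsup f l' := by
  refine le_of_forall_pos_le_add fun ε hε => ?_
  have hfreq : ∃ᶠ k in l, L - ε ≤ f (n k) :=
    (hbf.and_eventually (hb.eventually (eventually_gt_nhds (sub_lt_self L hε)))).mono
      fun k hk => hk.2.le.trans hk.1
  linarith [le_limsup_of_frequently_le (hn.frequently hfreq) hf]

lemma Filter.Tendsto.div_add_of_div_tendsto_zero {ι : Type*} {l : Filter ι} {a q d : ι → ℝ}
    {L : ℝ} (ha : Tendsto (fun k => a k / d k) l (𝓝 L))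
    (hq : Tendsto (fun k => q k / d k) l (𝓝 0)) (hd : ∀ᶠ k in l, d k ≠ 0) :
    Tendsto (fun k => a k / (q k + d k)) l (𝓝 L) := by
  have := ha.mul ((hq.add_const 1).inv₀ (by norm_num))
  rw [zero_add, inv_one, mul_one] at this
  refine this.congr' (hd.mono fun k hk => ?_)
  rw [div_add_one hk, inv_div, div_mul_div_cancel₀ hk]

end Limsup

section Dynamics

variable {β : ℝ}

lemma Tbeta_mem_Ioc (β x : ℝ) : Tbeta β x ∈ Ioc (0 : ℝ) 1 := by
  unfold Tbeta
  constructor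
  · linarith [Int.ceil_lt_add_one (β * x)]
  · linarith [Int.le_ceil (β * x)]

lemma Tbeta_iterate_mem_Ioc (β : ℝ) {x : ℝ} (hx : x ∈ Ioc (0 : ℝ) 1) (n : ℕ) :
    (Tbeta β)^[n] x ∈ Ioc (0 : ℝ) 1 := by
  cases n with
  | zero => exact hx
  | succ n => rw [Function.iterate_succ_apply']; exact Tbeta_mem_Ioc _ _

lemma Tbeta_iterate_succ (β x : ℝ) (n : ℕ) :
    (Tbeta β)^[n + 1] x = β * (Tbeta β)^[n] x - eps β x n := by
  rw [Function.iterate_succ_apply', eps, Tbeta]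
  push_cast
  ring

lemma eps_eq_iff (β y : ℝ) (n : ℕ) (e : ℤ) :
    eps β y n = e ↔ (e : ℝ) < β * (Tbeta β)^[n] y ∧ β * (Tbeta β)^[n] y ≤ e + 1 := by
  rw [eps, sub_eq_iff_eq_add, Int.ceil_eq_iff]
  push_cast
  constructor <;> rintro ⟨h₁, h₂⟩ <;> constructor <;> linarith

lemma eps_lt_mul_Tbeta_iterate (β y : ℝ) (n : ℕ) : (eps β y n : ℝ) < β * (Tbeta β)^[n] y :=
  ((eps_eq_iff β y n _).mp rfl).1

lemma eps_nonneg (hβ : 0 < β) {x : ℝ} (hx : x ∈ Ioc (0 : ℝ) 1) (n : ℕ) : 0 ≤ eps β x n := by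
  have := Int.ceil_pos.mpr (mul_pos hβ (Tbeta_iterate_mem_Ioc β hx n).1)
  unfold eps
  omega

lemma Tbeta_iterate_add_of_eps_eq_zero (y : ℝ) {j k : ℕ} (h : ∀ i < k, eps β y (j + i) = 0) :
    (Tbeta β)^[j + k] y = β ^ k * (Tbeta β)^[j] y := by
  induction k with
  | zero => simp
  | succ k ih =>
    rw [← add_assoc, Tbeta_iterate_succ, h k k.lt_succ_self, ih fun i hi => h i (by omega)]
    push_cast
    ring

end Dynamics

section BasicIntervals

variable {β x : ℝ}

/-- `c_n(x) = β ^ n * |I_n(x)|`: the interval `T_β^n (I_n(x))` is `(0, scaledLen β x n]`. -/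
def scaledLen (β x : ℝ) : ℕ → ℝ
  | 0 => 1
  | n + 1 => min (β * scaledLen β x n - eps β x n) 1

lemma scaledLen_le_one (β x : ℝ) (n : ℕ) : scaledLen β x n ≤ 1 := by
  cases n with
  | zero => exact le_rfl
  | succ n => exact min_le_right _ _

lemma mem_In_succ {y : ℝ} {n : ℕ} :
    y ∈ In β x (n + 1) ↔ y ∈ In β x n ∧ eps β y n = eps β x n := by
  simp only [In, mem_ofPred_eq, Nat.lt_succ_iff_lt_or_eq, or_imp, forall_and, forall_eq, and_assoc]

lemma Tbeta_iterate_of_mem_In {y : ℝ} {n : ℕ} (hy : y ∈ In β x n) :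
    (Tbeta β)^[n] y = (Tbeta β)^[n] x + β ^ n * (y - x) := by
  induction n with
  | zero => simp
  | succ n ih =>
    obtain ⟨hy, hdigit⟩ := mem_In_succ.mp hy
    rw [Tbeta_iterate_succ, Tbeta_iterate_succ, hdigit, ih hy]
    ring

lemma mem_In_iff (hβ : 0 < β) (hx : x ∈ Ioc (0 : ℝ) 1) (n : ℕ) (y : ℝ) :
    y ∈ In β x n ↔ 0 < (Tbeta β)^[n] x + β ^ n * (y - x) ∧
      (Tbeta β)^[n] x + β ^ n * (y - x) ≤ scaledLen β x n := by
  induction n with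
  | zero => simp [In, scaledLen]
  | succ n ih =>
    set u := (Tbeta β)^[n] x + β ^ n * (y - x)
    have hu : (Tbeta β)^[n + 1] x + β ^ (n + 1) * (y - x) = β * u - eps β x n := by
      rw [Tbeta_iterate_succ]; ring
    have he : (0 : ℝ) ≤ eps β x n := by exact_mod_cast eps_nonneg hβ hx n
    rw [mem_In_succ, hu, scaledLen, le_min_iff]
    constructor
    · rintro ⟨hyn, hdigit⟩
      rw [eps_eq_iff, Tbeta_iterate_of_mem_In hyn] at hdigit
      have := (ih.mp hyn).2
      exact ⟨by linarith, by nlinarith, by linarith⟩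
    · rintro ⟨hpos, hle, hle_one⟩
      have hyn : y ∈ In β x n := ih.mpr ⟨by nlinarith, by nlinarith⟩
      refine ⟨hyn, ?_⟩
      rw [eps_eq_iff, Tbeta_iterate_of_mem_In hyn]
      constructor <;> linarith

lemma Tbeta_iterate_le_scaledLen (hβ : 0 < β) (hx : x ∈ Ioc (0 : ℝ) 1) (n : ℕ) :
    (Tbeta β)^[n] x ≤ scaledLen β x n := by
  simpa using ((mem_In_iff hβ hx n x).mp ⟨hx, fun _ _ => rfl⟩).2

lemma scaledLen_pos (hβ : 0 < β) (hx : x ∈ Ioc (0 : ℝ) 1) (n : ℕ) : 0 < scaledLen β x n :=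
  (Tbeta_iterate_mem_Ioc β hx n).1.trans_le (Tbeta_iterate_le_scaledLen hβ hx n)

lemma In_eq_Ioc (hβ : 0 < β) (hx : x ∈ Ioc (0 : ℝ) 1) (n : ℕ) :
    In β x n = Ioc (x - (Tbeta β)^[n] x / β ^ n)
      (x - (Tbeta β)^[n] x / β ^ n + scaledLen β x n / β ^ n) := by
  have hβn : 0 < β ^ n := pow_pos hβ n
  ext y
  have hy : (Tbeta β)^[n] x + β ^ n * (y - x) = β ^ n * (y - (x - (Tbeta β)^[n] x / β ^ n)) := by
    field_simp
    ring
  rw [mem_In_iff hβ hx, hy, mul_pos_iff_of_pos_left hβn, sub_pos, ← le_div_iff₀' hβn,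
    sub_le_iff_le_add', mem_Ioc]

lemma len_In (hβ : 0 < β) (hx : x ∈ Ioc (0 : ℝ) 1) (n : ℕ) :
    len (In β x n) = scaledLen β x n / β ^ n := by
  rw [len, In_eq_Ioc hβ hx, Real.volume_Ioc, add_sub_cancel_left,
    ENNReal.toReal_ofReal (div_pos (scaledLen_pos hβ hx n) (pow_pos hβ n)).le]

end BasicIntervals

section Orbit

variable {β x : ℝ}

/-- When the minimum defining `c_{n+1}` is not `1`, the digit `ε_{n+1}(x)` equals
`⌈β c_n⌉ - 1` because `T_β^n x ≤ c_n`, so `c_{n+1} = T_β c_n`. -/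
lemma scaledLen_succ_eq_or_eq_one (hβ : 0 < β) (hx : x ∈ Ioc (0 : ℝ) 1) (n : ℕ) :
    scaledLen β x (n + 1) = Tbeta β (scaledLen β x n) ∨ scaledLen β x (n + 1) = 1 := by
  by_cases h : β * scaledLen β x n - eps β x n < 1
  · left
    have hdigit := eps_lt_mul_Tbeta_iterate β x n
    have hle := mul_le_mul_of_nonneg_left (Tbeta_iterate_le_scaledLen hβ hx n) hβ.le
    have hceil : ⌈β * scaledLen β x n⌉ = eps β x n + 1 := by
      rw [Int.ceil_eq_iff]
      push_cast
      constructor <;> linarith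
    rw [scaledLen, min_eq_left h.le, Tbeta, hceil]
    push_cast
    ring
  · exact Or.inr (min_eq_right (not_lt.mp h))

lemma exists_scaledLen_eq_iterate_one (hβ : 0 < β) (hx : x ∈ Ioc (0 : ℝ) 1) (n : ℕ) :
    ∃ j ≤ n, scaledLen β x n = (Tbeta β)^[j] 1 := by
  induction n with
  | zero => exact ⟨0, le_rfl, rfl⟩
  | succ n ih =>
    obtain ⟨j, hj, hc⟩ := ih
    rcases scaledLen_succ_eq_or_eq_one hβ hx n with h | h
    · exact ⟨j + 1, by omega, by rw [h, hc, Function.iterate_succ_apply']⟩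
    · exact ⟨0, by omega, h⟩

lemma scaledLen_le_iterate_one_of_eps_eq (hβ : 0 ≤ β) {p M : ℕ}
    (h : ∀ i < M, eps β x (p + i) = eps β 1 i) :
    scaledLen β x (p + M) ≤ (Tbeta β)^[M] 1 := by
  induction M with
  | zero => exact scaledLen_le_one β x p
  | succ M ih =>
    have hle := mul_le_mul_of_nonneg_left (ih fun i hi => h i (by omega)) hβ
    rw [← add_assoc, scaledLen, Tbeta_iterate_succ, ← h M M.lt_succ_self]
    exact (min_le_left _ _).trans (by linarith)

end Orbit

section ZeroRuns

variable {β : ℝ}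

lemma tseq_bddAbove (hβ : 1 < β) (j : ℕ) : BddAbove {k : ℕ | ∀ i < k, eps β 1 (j + i) = 0} := by
  have hpos := (Tbeta_iterate_mem_Ioc β (right_mem_Ioc.mpr one_pos) j).1
  obtain ⟨K, hK⟩ := pow_unbounded_of_one_lt ((Tbeta β)^[j] 1)⁻¹ hβ
  refine ⟨K, fun k hk => ?_⟩
  by_contra! hKk
  have hrun := Tbeta_iterate_add_of_eps_eq_zero 1 hk
  have hle_one := (Tbeta_iterate_mem_Ioc β (right_mem_Ioc.mpr one_pos) (j + k)).2
  have hpow := pow_le_pow_right₀ hβ.le hKk.le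
  rw [inv_lt_iff_one_lt_mul₀ hpos] at hK
  nlinarith

lemma eps_one_eq_zero_of_lt_tseq (hβ : 1 < β) {j i : ℕ} (hi : i < tseq β j) :
    eps β 1 (j + i) = 0 :=
  Nat.sSup_mem ⟨0, fun _ h => absurd h (Nat.not_lt_zero _)⟩ (tseq_bddAbove hβ j) i hi

lemma eps_one_tseq_ne_zero (hβ : 1 < β) (j : ℕ) : eps β 1 (j + tseq β j) ≠ 0 := by
  intro h
  have hmem : tseq β j + 1 ∈ {k : ℕ | ∀ i < k, eps β 1 (j + i) = 0} := by
    intro i hi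
    rcases Nat.lt_succ_iff_lt_or_eq.mp hi with hi | rfl
    · exact eps_one_eq_zero_of_lt_tseq hβ hi
    · exact h
  exact (le_csSup (tseq_bddAbove hβ j) hmem).not_gt (Nat.lt_succ_self _)

lemma Tbeta_iterate_one_add_tseq (hβ : 1 < β) (j : ℕ) :
    (Tbeta β)^[j + tseq β j] 1 = β ^ tseq β j * (Tbeta β)^[j] 1 :=
  Tbeta_iterate_add_of_eps_eq_zero 1 fun _ hi => eps_one_eq_zero_of_lt_tseq hβ hi

lemma Tbeta_iterate_one_le (hβ : 1 < β) (j : ℕ) :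
    (Tbeta β)^[j] 1 ≤ (β ^ tseq β j)⁻¹ := by
  have hrun := Tbeta_iterate_one_add_tseq hβ j
  have hle_one := (Tbeta_iterate_mem_Ioc β (right_mem_Ioc.mpr one_pos) (j + tseq β j)).2
  rw [hrun] at hle_one
  rw [← one_div, le_div_iff₀ (pow_pos (by linarith) _)]
  linarith

lemma inv_pow_lt_Tbeta_iterate_one (hβ : 1 < β) (j : ℕ) :
    (β ^ (tseq β j + 1))⁻¹ < (Tbeta β)^[j] 1 := by
  have hrun := Tbeta_iterate_one_add_tseq hβ j
  have hdigit : (1 : ℝ) ≤ eps β 1 (j + tseq β j) := by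
    have := eps_nonneg (by linarith : (0 : ℝ) < β) (right_mem_Ioc.mpr one_pos) (j + tseq β j)
    have := eps_one_tseq_ne_zero hβ j
    exact_mod_cast (by omega : (1 : ℤ) ≤ eps β 1 (j + tseq β j))
  have hlt := eps_lt_mul_Tbeta_iterate β 1 (j + tseq β j)
  rw [hrun] at hlt
  rw [inv_lt_iff_one_lt_mul₀' (pow_pos (by linarith) _), pow_succ]
  linarith

end ZeroRuns

section LengthBounds

variable {β x : ℝ}

lemma inv_pow_Gam_lt_scaledLen (hβ : 1 < β) (hx : x ∈ Ioc (0 : ℝ) 1) (n : ℕ) :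
    (β ^ (Gam β n + 1))⁻¹ < scaledLen β x n := by
  obtain ⟨j, hjn, hc⟩ := exists_scaledLen_eq_iterate_one (by linarith) hx n
  rw [hc]
  rcases Nat.eq_zero_or_pos j with rfl | hj
  · exact inv_lt_one_of_one_lt₀ (one_lt_pow₀ hβ (Nat.succ_ne_zero _))
  · have htj : tseq β j ≤ Gam β n := Finset.le_sup (Finset.mem_Icc.mpr ⟨hj, hjn⟩)
    calc (β ^ (Gam β n + 1))⁻¹ ≤ (β ^ (tseq β j + 1))⁻¹ :=
          inv_anti₀ (by positivity) (pow_le_pow_right₀ hβ.le (by omega))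
      _ < (Tbeta β)^[j] 1 := inv_pow_lt_Tbeta_iterate_one hβ j

lemma neg_logb_len_In (hβ : 1 < β) (hx : x ∈ Ioc (0 : ℝ) 1) (n : ℕ) :
    -Real.logb β (len (In β x n)) = n - Real.logb β (scaledLen β x n) := by
  have hβ₀ : 0 < β := by linarith
  rw [len_In hβ₀ hx, Real.logb_div (scaledLen_pos hβ₀ hx n).ne' (pow_pos hβ₀ n).ne',
    Real.logb_pow, Real.logb_self_eq_one hβ]
  ring

lemma logb_inv_pow (hβ : 1 < β) (k : ℕ) : Real.logb β (β ^ k)⁻¹ = -k := by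
  rw [Real.logb_inv, Real.logb_pow, Real.logb_self_eq_one hβ, mul_one]

lemma le_neg_logb_len_In (hβ : 1 < β) (hx : x ∈ Ioc (0 : ℝ) 1) (n : ℕ) :
    (n : ℝ) ≤ -Real.logb β (len (In β x n)) := by
  rw [neg_logb_len_In hβ hx]
  linarith [Real.logb_nonpos hβ (scaledLen_pos (by linarith) hx n).le (scaledLen_le_one β x n)]

lemma neg_logb_len_In_lt (hβ : 1 < β) (hx : x ∈ Ioc (0 : ℝ) 1) (n : ℕ) :
    -Real.logb β (len (In β x n)) < n + Gam β n + 1 := by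
  have := Real.logb_lt_logb hβ (by positivity) (inv_pow_Gam_lt_scaledLen hβ hx n)
  rw [logb_inv_pow hβ] at this
  rw [neg_logb_len_In hβ hx]
  push_cast at this
  linarith

lemma le_neg_logb_len_In_of_eps_eq (hβ : 1 < β) (hx : x ∈ Ioc (0 : ℝ) 1) {p M : ℕ}
    (h : ∀ i < M, eps β x (p + i) = eps β 1 i) :
    ((p + M : ℕ) : ℝ) + tseq β M ≤ -Real.logb β (len (In β x (p + M))) := by
  have hle := (scaledLen_le_iterate_one_of_eps_eq (by linarith) h).trans (Tbeta_iterate_one_le hβ M)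
  have := Real.logb_le_logb_of_le hβ (scaledLen_pos (by linarith) hx _) hle
  rw [logb_inv_pow hβ] at this
  rw [neg_logb_len_In hβ hx]
  linarith

end LengthBounds

section Words

variable {β x : ℝ}

lemma eps_eq_getD_of_mem_cyl_append {u v s : List ℤ} (hx : x ∈ cyl β (u ++ (v ++ s))) {i : ℕ}
    (hi : i < v.length) : eps β x (u.length + i) = v.getD i 0 := by
  rw [hx.2 (u.length + i) (by simp; omega), List.getD_append_right _ _ _ _ (by omega),
    Nat.add_sub_cancel_left, List.getD_append _ _ _ _ hi]

lemma estarWord_getD (β : ℝ) {M i : ℕ} (hi : i < M) : (estarWord β M).getD i 0 = eps β 1 i := by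
  simp [estarWord, hi]

/-- `ω_M = (ε*_1, …, ε*_M, 0^{t_M + 1})`. -/
def omegaWord (β : ℝ) (M : ℕ) : List ℤ := estarWord β M ++ List.replicate (tseq β M + 1) 0

lemma length_flatten_omegaWord (β : ℝ) (m : ℕ → ℕ) (r : ℕ) :
    ((List.range r).map fun j => omegaWord β (m (j + 1))).flatten.length =
      ∑ j ∈ Finset.Icc 1 r, (m j + tseq β (m j) + 1) := by
  induction r with
  | zero => simp
  | succ r ih =>
    rw [List.range_succ, List.map_append, List.flatten_append, List.length_append, ih,
      Finset.sum_Icc_succ_top (by omega)]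
    simp [omegaWord, estarWord, add_assoc]

/-- The position in the word defining `U` at level `k` after which the copy of
`(ε*_1, …, ε*_{m_k})` inside `ω_k` starts. -/
def blockStart (β : ℝ) (m : ℕ → ℕ) (k : ℕ) : ℕ :=
  k + Gam β k + 1 + ∑ j ∈ Finset.Icc 1 (k - 1), (m j + tseq β (m j) + 1)

lemma eps_blockStart_add {m : ℕ → ℕ} {k : ℕ} (hk : 1 ≤ k) {w : List ℤ} (hw : w.length = k)
    (hx : x ∈ cyl β (w ++ List.replicate (Gam β k + 1) 0 ++
      ((List.range k).map fun j => omegaWord β (m (j + 1))).flatten)) {i : ℕ} (hi : i < m k) :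
    eps β x (blockStart β m k + i) = eps β 1 i := by
  obtain ⟨r, rfl⟩ : ∃ r, k = r + 1 := ⟨k - 1, by omega⟩
  rw [List.range_succ, List.map_append, List.flatten_append, List.map_singleton,
    List.flatten_singleton, omegaWord, ← List.append_assoc (w ++ _)] at hx
  have hlen : (w ++ List.replicate (Gam β (r + 1) + 1) 0 ++
      ((List.range r).map fun j => omegaWord β (m (j + 1))).flatten).length =
      blockStart β m (r + 1) := by
    simp only [List.length_append, List.length_replicate, length_flatten_omegaWord, hw,
      blockStart, Nat.add_sub_cancel]
    ring
  have := eps_eq_getD_of_mem_cyl_append (v := estarWord β (m (r + 1))) hx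
    (by simpa [estarWord] using hi)
  rwa [hlen, estarWord_getD β hi] at this

lemma intIn01_subset (S : Set ℝ) : intIn01 S ⊆ S :=
  fun _ hy => by_contra fun h => hy.2 (subset_closure ⟨hy.1, h⟩)

end Words

section UpperDensity

variable {β x : ℝ}

lemma neg_logb_len_In_div_nonneg (hβ : 1 < β) (hx : x ∈ Ioc (0 : ℝ) 1) (n : ℕ) :
    0 ≤ -Real.logb β (len (In β x n)) / n :=
  div_nonneg ((Nat.cast_nonneg n).trans (le_neg_logb_len_In hβ hx n)) (Nat.cast_nonneg n)

lemma isBoundedUnder_Gam_div (hlam : 0 < lam β) :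
    IsBoundedUnder (· ≤ ·) atTop fun n : ℕ => (Gam β n : ℝ) / n :=
  Real.isBoundedUnder_le_of_limsup_ne_zero hlam.ne'

lemma tendsto_one_add_one_div_nat : Tendsto (fun n : ℕ => 1 + 1 / (n : ℝ)) atTop (𝓝 1) := by
  simpa using tendsto_one_div_atTop_nhds_zero_nat.const_add (1 : ℝ)

lemma neg_logb_len_In_div_le (hβ : 1 < β) (hx : x ∈ Ioc (0 : ℝ) 1) :
    (fun n : ℕ => -Real.logb β (len (In β x n)) / n) ≤ᶠ[atTop]
      (fun n : ℕ => (Gam β n : ℝ) / n) + fun n : ℕ => 1 + 1 / (n : ℝ) := by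
  filter_upwards [eventually_gt_atTop 0] with n hn
  have hn : (0 : ℝ) < n := Nat.cast_pos.mpr hn
  rw [div_le_iff₀ hn, Pi.add_apply, add_mul, add_mul, div_mul_cancel₀ _ hn.ne',
    div_mul_cancel₀ _ hn.ne']
  linarith [neg_logb_len_In_lt hβ hx n]

lemma isBoundedUnder_neg_logb_len_In_div (hβ : 1 < β) (hlam : 0 < lam β)
    (hx : x ∈ Ioc (0 : ℝ) 1) :
    IsBoundedUnder (· ≤ ·) atTop fun n : ℕ => -Real.logb β (len (In β x n)) / n :=
  (isBoundedUnder_le_add (isBoundedUnder_Gam_div hlam)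
    tendsto_one_add_one_div_nat.isBoundedUnder_le).mono_le (neg_logb_len_In_div_le hβ hx)

lemma upperD_le (hβ : 1 < β) (hlam : 0 < lam β) (hx : x ∈ Ioc (0 : ℝ) 1) :
    upperD β x ≤ 1 + lam β := by
  have hGam := isBoundedUnder_Gam_div hlam
  have hGam₀ : IsBoundedUnder (· ≥ ·) atTop fun n : ℕ => (Gam β n : ℝ) / n :=
    isBoundedUnder_of_eventually_ge (.of_forall fun n => by positivity)
  have hrest := tendsto_one_add_one_div_nat
  calc upperD β x
      ≤ limsup ((fun n : ℕ => (Gam β n : ℝ) / n) + fun n : ℕ => 1 + 1 / (n : ℝ)) atTop :=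
        limsup_le_limsup (neg_logb_len_In_div_le hβ hx)
          (isBoundedUnder_of_eventually_ge (.of_forall (neg_logb_len_In_div_nonneg hβ hx))
            |>.isCoboundedUnder_le)
          (isBoundedUnder_le_add hGam hrest.isBoundedUnder_le)
    _ ≤ lam β + 1 :=
        (limsup_add_le hGam₀ hGam hrest.isBoundedUnder_ge.isCoboundedUnder_le
          hrest.isBoundedUnder_le).trans_eq (by rw [hrest.limsup_eq]; rfl)
    _ = 1 + lam β := add_comm _ _

lemma one_add_lam_le_upperD {m : ℕ → ℕ} (hβ : 1 < β) (hlam : 0 < lam β) (hm : StrictMono m)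
    (h1 : Tendsto (fun k => (tseq β (m k) : ℝ) / (m k : ℝ)) atTop (𝓝 (lam β)))
    (h2 : Tendsto (fun k => (blockStart β m k : ℝ) / (m k : ℝ)) atTop (𝓝 0))
    (hx : x ∈ Ioc (0 : ℝ) 1)
    (hfreq : ∃ᶠ k in atTop, ∀ i < m k, eps β x (blockStart β m k + i) = eps β 1 i) :
    1 + lam β ≤ upperD β x := by
  have hm₀ : ∀ᶠ k in atTop, (m k : ℝ) ≠ 0 :=
    (eventually_gt_atTop 0).mono fun k hk => Nat.cast_ne_zero.mpr (hk.trans_le (hm.id_le k)).ne'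
  refine le_limsup_of_frequently_le_comp (n := fun k => blockStart β m k + m k)
    (tendsto_atTop_mono (fun k => (hm.id_le k).trans (Nat.le_add_left _ _)) tendsto_id)
    ((h1.div_add_of_div_tendsto_zero h2 hm₀).const_add 1)
    (hfreq.mono fun k hk => ?_) (isBoundedUnder_neg_logb_len_In_div hβ hlam hx)
  have hpos : (0 : ℝ) < blockStart β m k + m k := by
    exact_mod_cast (by unfold blockStart; omega : 0 < blockStart β m k + m k)
  have := le_neg_logb_len_In_of_eps_eq hβ hx hk
  push_cast at this ⊢
  rw [le_div_iff₀ hpos, add_mul, div_mul_cancel₀ _ hpos.ne', one_mul]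
  linarith

end UpperDensity

theorem U_subset_E_general (β : ℝ) (hβ : 1 < β) (hlam : 0 < lam β)
    (m : ℕ → ℕ) (hmono : StrictMono m)
    (h1 : Tendsto (fun k => (tseq β (m k) : ℝ) / (m k : ℝ)) atTop (nhds (lam β)))
    (h2 : Tendsto (fun k : ℕ =>
        ((k : ℝ) + (Gam β k : ℝ) + 1 +
            ∑ j ∈ Finset.Icc 1 (k - 1), ((m j : ℝ) + (tseq β (m j) : ℝ) + 1)) / (m k : ℝ))
      atTop (nhds 0)) :
    (⋂ n : ℕ, ⋃ k : ℕ, ⋃ (_ : n ≤ k ∧ 1 ≤ k), ⋃ w : List ℤ,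
        ⋃ (_ : w.length = k ∧ Admissible β w),
          intIn01 (cyl β (w ++ List.replicate (Gam β k + 1) 0 ++
            ((List.range k).map (fun j =>
              estarWord β (m (j + 1)) ++ List.replicate (tseq β (m (j + 1)) + 1) 0)).flatten)))
      ⊆ {x ∈ Ioc (0:ℝ) 1 | upperD β x = 1 + lam β} := by
  intro x hx
  simp only [mem_iInter, mem_iUnion] at hx
  have hx01 : x ∈ Ioc (0 : ℝ) 1 := by
    obtain ⟨k, -, w, -, hxk⟩ := hx 0
    exact (intIn01_subset _ hxk).1
  have hfreq : ∃ᶠ k in atTop, ∀ i < m k, eps β x (blockStart β m k + i) = eps β 1 i :=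
    frequently_atTop.mpr fun N => by
      obtain ⟨k, ⟨hNk, hk⟩, w, ⟨hw, -⟩, hxk⟩ := hx N
      exact ⟨k, hNk, fun i => eps_blockStart_add hk hw (intIn01_subset _ hxk)⟩
  have h2' : Tendsto (fun k => (blockStart β m k : ℝ) / (m k : ℝ)) atTop (𝓝 0) := by
    simpa only [blockStart, Nat.cast_add, Nat.cast_one, Nat.cast_sum] using h2
  exact ⟨hx01, (upperD_le hβ hlam hx01).antisymm
    (one_add_lam_le_upperD hβ hlam hmono h1 h2' hx01 hfreq)⟩

/-- Suppose `λ(β) > 0` and `(m_k)_{k ≥ 1}` is an increasing sequence of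
positive integers with `lim_k t_{m_k}/m_k = λ(β)` and
`lim_k (k + Γ_k + 1 + Σ_{j=1}^{k−1}(m_j + t_{m_j} + 1))/m_k = 0`. Setting
`ω_k = (ε*_1,…,ε*_{m_k}, 0^{t_{m_k}+1})` and
`U = ∩_{n≥1} ∪_{k≥n} ∪_{(ε_1,…,ε_k) admissible} int(I(ε_1,…,ε_k, 0^{Γ_k+1}, ω_1,…,ω_k))`
(interiors in `[0,1]`), every `x ∈ U` satisfies
`limsup_n (−log_β |I_n(x)|)/n = 1 + λ(β)`, i.e. `U ⊆ E`. -/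
theorem U_subset_E (β : ℝ) (hβ : 1 < β) (hlam : 0 < lam β)
    (m : ℕ → ℕ) (hmono : StrictMono m) (hpos : ∀ k, 0 < m k)
    (h1 : Tendsto (fun k => (tseq β (m k) : ℝ) / (m k : ℝ)) atTop (nhds (lam β)))
    (h2 : Tendsto (fun k : ℕ =>
        ((k : ℝ) + (Gam β k : ℝ) + 1 +
            ∑ j ∈ Finset.Icc 1 (k - 1), ((m j : ℝ) + (tseq β (m j) : ℝ) + 1)) / (m k : ℝ))
      atTop (nhds 0)) :
    (⋂ n : ℕ, ⋃ k : ℕ, ⋃ (_ : n ≤ k ∧ 1 ≤ k), ⋃ w : List ℤ,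
        ⋃ (_ : w.length = k ∧ Admissible β w),
          intIn01 (cyl β (w ++ List.replicate (Gam β k + 1) 0 ++
            ((List.range k).map (fun j =>
              estarWord β (m (j + 1)) ++ List.replicate (tseq β (m (j + 1)) + 1) 0)).flatten)))
      ⊆ {x ∈ Ioc (0:ℝ) 1 | upperD β x = 1 + lam β} :=
  U_subset_E_general β hβ hlam m hmono h1 h2
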